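/- Stability of the hook product h↓ (Lemma in Appendix C). Let λ and μ be partitions and let m₁, m₂ be integers with m₁, m₂ ≥ |λ| + |μ|. For an integer m ≥ |λ| + |μ| set Λ*(m) = (λ + δ^m) ∪ μ, Λ⊛(m) = (λ + δ^{m+1}) ∪ μ, and h↓(m) = ∏_{(i,j) bosonic for (Λ*(m),Λ⊛(m))} (1 − q^{Λ⊛(m)_i − j} t^{(Λ*(m))'_j − i + 1}) in ℤ[q,t]. Then h↓(m₁) = h↓(m₂); i.e. h↓_Λ(q,t) does not depend on m in the stable sector. -/

import Mathlib

noncomputable section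

namespace DoubleMacdonald

/-- A partition, encoded as a weakly decreasing function `ℕ → ℕ` (0-indexed: `f 0 = λ₁`)
with finitely many nonzero values. -/
def IsPartition (f : ℕ → ℕ) : Prop :=
  (∀ ⦃i j : ℕ⦄, i ≤ j → f j ≤ f i) ∧ ∃ N, ∀ i, N ≤ i → f i = 0

/-- The size `|λ| = Σᵢ λᵢ` of a partition. -/
def psize (f : ℕ → ℕ) : ℕ := ∑ᶠ i, f i

/-- The number `ℓ(λ)` of nonzero parts of a partition. -/
def plen (f : ℕ → ℕ) : ℕ := Nat.card {i : ℕ | 1 ≤ f i}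

/-- The conjugate partition: `λ'ⱼ = #{i : λᵢ ≥ j}` (0-indexed: `conj f j = λ'_{j+1}`). -/
def conj (f : ℕ → ℕ) : ℕ → ℕ := fun j => Nat.card {i : ℕ | j + 1 ≤ f i}

/-- The staircase partition `δ^m = (m-1, m-2, …, 1, 0)`. -/
def delta (m : ℕ) : ℕ → ℕ := fun i => m - 1 - i

/-- Componentwise sum of partitions. -/
def addF (f g : ℕ → ℕ) : ℕ → ℕ := fun i => f i + g i

/-- Union `λ ∪ μ` of partitions: the weakly decreasing rearrangement of the combined
multiset of parts, defined via `(λ ∪ μ)' = λ' + μ'`. -/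
def unionF (f g : ℕ → ℕ) : ℕ → ℕ := conj (addF (conj f) (conj g))

/-- Partial sum `λ₁ + ⋯ + λ_k`. -/
def psum (f : ℕ → ℕ) (k : ℕ) : ℕ := ∑ i ∈ Finset.range k, f i

/-- The statistic `n(λ) = Σᵢ (i-1) λᵢ`. -/
def nstat (f : ℕ → ℕ) : ℕ := ∑ᶠ i, i * f i

/-- The (extended) dominance order: `f ⪰ g` iff all partial sums of `f` dominate those of `g`. -/
def Dominates (f g : ℕ → ℕ) : Prop := ∀ k, psum g k ≤ psum f k

open MvPolynomial

/-- The indeterminate `q` in `ℤ[q,t]`. -/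
def qp : MvPolynomial (Fin 2) ℤ := X 0

/-- The indeterminate `t` in `ℤ[q,t]`. -/
def tp : MvPolynomial (Fin 2) ℤ := X 1

/-- A cell `(i,j)` (0-indexed) of `Λ*` is bosonic for the pair `(Λ*, Λ⊛)` if it is NOT
the case that both `Λ⊛ᵢ = Λ*ᵢ + 1` and `(Λ⊛)'ⱼ = (Λ*)'ⱼ + 1`. -/
def Bosonic (L Ls : ℕ → ℕ) (i j : ℕ) : Prop :=
  ¬(Ls i = L i + 1 ∧ conj Ls j = conj L j + 1)

instance (L Ls : ℕ → ℕ) (i j : ℕ) : Decidable (Bosonic L Ls i j) := by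
  unfold Bosonic; infer_instance

/-- The hook product `h↓(q,t) = ∏_{s bosonic} (1 − q^{a_{Λ⊛}(s)} t^{l_{Λ*}(s)+1})`
over the bosonic cells of `Λ*`, as an element of `ℤ[q,t]`. -/
def hdown (L Ls : ℕ → ℕ) : MvPolynomial (Fin 2) ℤ :=
  ∏ i ∈ Finset.range (plen L), ∏ j ∈ Finset.range (L i),
    if Bosonic L Ls i j then (1 - qp ^ (Ls i - (j + 1)) * tp ^ (conj L j - i)) else 1

/-- The hook product `h↓(m)` attached to partitions `λ, μ` and an integer `m`, built from
`Λ*(m) = (λ + δ^m) ∪ μ` and `Λ⊛(m) = (λ + δ^{m+1}) ∪ μ`. -/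
def hdownOf (f g : ℕ → ℕ) (m : ℕ) : MvPolynomial (Fin 2) ℤ :=
  hdown (unionF (addF f (delta m)) g) (unionF (addF f (delta (m+1))) g)

/-!
Write `Λ*(m) = (λ + δ^m) ∪ μ`, so that `Λ⊛(m) = Λ*(m+1)`, and let `K = ℓ(λ)`. For `m ≥ K + μ₁`
the parts of `μ` are too short to interleave with the first `K` rows, and `Λ*(m+1)` arises from
`Λ*(m)` by widening its first `K` rows by one cell on the left and inserting a row of length
`m - K` below them, the remaining rows moving down by one. The new cells are not bosonic for
`(Λ*(m+1), Λ*(m+2))`, since both their row and their column grow; every other cell of `Λ*(m+1)`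
comes from a cell of `Λ*(m)` with the same bosonic status and, when bosonic, the same arm in `Λ⊛`
and leg in `Λ*`. Hence `h↓(m+1) = h↓(m)`, and `|λ| + |μ| ≥ K + μ₁`.
-/

open Finset

theorem eq_Iio_ncard_of_isLowerSet {S : Set ℕ} (hS : IsLowerSet S) (hfin : S.Finite) :
    S = Set.Iio S.ncard := by
  obtain h | ⟨a, rfl⟩ := hS.eq_univ_or_Iio
  · exact absurd (h ▸ hfin) Set.infinite_univ
  · rw [Set.ncard_Iio_nat]

theorem prod_range_eq_prod_range_succ_of_shift {M : Type*} [CommMonoid M] {R₀ R₁ : ℕ → M}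
    {K N : ℕ} (hKN : K ≤ N) (htop : ∀ i < K, R₁ i = R₀ i) (hK : R₁ K = 1)
    (hbot : ∀ i, K ≤ i → R₁ (i + 1) = R₀ i) :
    ∏ i ∈ range N, R₀ i = ∏ i ∈ range (N + 1), R₁ i := by
  induction N, hKN using Nat.le_induction with
  | base =>
    rw [prod_range_succ, hK, mul_one]
    exact prod_congr rfl fun i hi => (htop i (mem_range.1 hi)).symm
  | succ N hKN ih => rw [prod_range_succ, ih, prod_range_succ _ (N + 1), hbot N hKN]

theorem isPartition_delta (m : ℕ) : IsPartition (delta m) :=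
  ⟨fun i j hij => by simp only [delta]; omega, ⟨m, fun i hi => by simp only [delta]; omega⟩⟩

namespace IsPartition

variable {f g : ℕ → ℕ}

theorem add (hf : IsPartition f) (hg : IsPartition g) : IsPartition (addF f g) := by
  obtain ⟨N, hN⟩ := hf.2
  obtain ⟨N', hN'⟩ := hg.2
  refine ⟨fun i j hij => Nat.add_le_add (hf.1 hij) (hg.1 hij), max N N', fun i hi => ?_⟩
  simp only [addF, hN i (le_of_max_le_left hi), hN' i (le_of_max_le_right hi)]

theorem add_delta (hf : IsPartition f) (m : ℕ) : IsPartition (addF f (delta m)) :=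
  hf.add (isPartition_delta m)

theorem lt_conj_iff (hf : IsPartition f) (i j : ℕ) : i < conj f j ↔ j < f i := by
  obtain ⟨N, hN⟩ := hf.2
  have hlower : IsLowerSet {i | j + 1 ≤ f i} := fun a b hba ha => le_trans ha (hf.1 hba)
  have hfin : {i | j + 1 ≤ f i}.Finite := by
    refine (Set.finite_Iio N).subset fun k (hk : j + 1 ≤ f k) =>
      Set.mem_Iio.2 (not_le.1 fun hkN => ?_)
    have := hN k hkN
    omega
  rw [conj, Nat.card_coe_set_eq, ← Set.mem_Iio, ← eq_Iio_ncard_of_isLowerSet hlower hfin]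
  rfl

theorem conj_eq_zero_of_le (hf : IsPartition f) {j : ℕ} (hj : f 0 ≤ j) : conj f j = 0 := by
  by_contra hne
  have := (hf.lt_conj_iff 0 j).1 (Nat.pos_of_ne_zero hne)
  omega

theorem conj (hf : IsPartition f) : IsPartition (conj f) :=
  ⟨fun _ _ hjj' => le_of_forall_lt fun k hk => by
      rw [hf.lt_conj_iff] at hk ⊢
      omega,
    ⟨f 0, fun _ hj => hf.conj_eq_zero_of_le hj⟩⟩

theorem conj_conj (hf : IsPartition f) : DoubleMacdonald.conj (DoubleMacdonald.conj f) = f :=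
  funext fun i => eq_of_forall_lt_iff fun k => by rw [hf.conj.lt_conj_iff, hf.lt_conj_iff]

theorem pos_of_lt_plen (hf : IsPartition f) {i : ℕ} (hi : i < plen f) : 0 < f i :=
  (hf.lt_conj_iff i 0).1 hi

theorem eq_zero_of_plen_le (hf : IsPartition f) {i : ℕ} (hi : plen f ≤ i) : f i = 0 := by
  by_contra hne
  exact absurd ((hf.lt_conj_iff i 0).2 (Nat.pos_of_ne_zero hne)) (not_lt.2 hi)

theorem sum_range_le_psize (hf : IsPartition f) (n : ℕ) : ∑ i ∈ range n, f i ≤ psize f := by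
  obtain ⟨N, hN⟩ := hf.2
  have hsupp : Function.support f ⊆ ↑(range (max n N)) := fun i hi => by
    by_contra hiN
    simp only [coe_range, Set.mem_Iio, not_lt] at hiN
    exact hi (hN i (le_of_max_le_right hiN))
  rw [psize, finsum_eq_sum_of_support_subset f hsupp]
  exact sum_le_sum_of_subset (range_subset_range.2 (le_max_left n N))

theorem plen_le_psize (hf : IsPartition f) : plen f ≤ psize f :=
  calc plen f = ∑ _i ∈ range (plen f), 1 := by simp
    _ ≤ ∑ i ∈ range (plen f), f i := sum_le_sum fun i hi => hf.pos_of_lt_plen (mem_range.1 hi)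
    _ ≤ psize f := hf.sum_range_le_psize _

theorem head_le_psize (hf : IsPartition f) : f 0 ≤ psize f := by
  simpa using hf.sum_range_le_psize 1

end IsPartition

def stairUnion (f g : ℕ → ℕ) (m : ℕ) : ℕ → ℕ := unionF (addF f (delta m)) g

theorem hdownOf_eq (f g : ℕ → ℕ) (m : ℕ) :
    hdownOf f g m = hdown (stairUnion f g m) (stairUnion f g (m + 1)) := rfl

section Stair

variable {f g : ℕ → ℕ} (hf : IsPartition f) (hg : IsPartition g)
include hf

theorem lt_conj_stair_iff (m i j : ℕ) :
    i < conj (addF f (delta m)) j ↔ j < f i + (m - 1 - i) :=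
  (hf.add_delta m).lt_conj_iff i j

theorem conj_stair_of_lt_sub_plen {m j : ℕ} (hm : plen f ≤ m) (hj : j < m - plen f) :
    conj (addF f (delta m)) j = m - 1 - j := by
  refine eq_of_forall_lt_iff fun k => ?_
  rw [lt_conj_stair_iff hf]
  rcases lt_or_ge k (plen f) with hk | hk
  · have := hf.pos_of_lt_plen hk
    omega
  · have := hf.eq_zero_of_plen_le hk
    omega

theorem conj_stair_succ_succ {m : ℕ} (hm : plen f ≤ m) (j : ℕ) :
    conj (addF f (delta (m + 1))) (j + 1) = conj (addF f (delta m)) j := by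
  refine eq_of_forall_lt_iff fun k => ?_
  rw [lt_conj_stair_iff hf, lt_conj_stair_iff hf]
  rcases lt_or_ge k m with hk | hk
  · omega
  · have := hf.eq_zero_of_plen_le (hm.trans hk)
    omega

theorem conj_stair_le_plen {m j : ℕ} (hj : m - plen f ≤ j + 1) :
    conj (addF f (delta m)) j ≤ plen f := by
  refine not_lt.1 fun h => ?_
  have := (lt_conj_stair_iff hf m (plen f) j).1 h
  have := hf.eq_zero_of_plen_le le_rfl
  omega

include hg

theorem isPartition_stairUnion (m : ℕ) : IsPartition (stairUnion f g m) :=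
  ((hf.add_delta m).conj.add hg.conj).conj

theorem conj_stairUnion (m j : ℕ) :
    conj (stairUnion f g m) j = conj (addF f (delta m)) j + conj g j :=
  congrFun ((hf.add_delta m).conj.add hg.conj).conj_conj j

theorem lt_stairUnion_iff (m i k : ℕ) :
    k < stairUnion f g m i ↔ i < conj (addF f (delta m)) k + conj g k := by
  rw [← (isPartition_stairUnion hf hg m).lt_conj_iff, conj_stairUnion hf hg]

theorem plen_stairUnion_le {m : ℕ} (hm : plen f ≤ m) : plen (stairUnion f g m) ≤ m + conj g 0 := by
  have hcol : conj (addF f (delta m)) 0 ≤ m := not_lt.1 fun h => by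
    have := (lt_conj_stair_iff hf m m 0).1 h
    have := hf.eq_zero_of_plen_le hm
    omega
  exact (conj_stairUnion hf hg m 0).trans_le (Nat.add_le_add_right hcol _)

theorem conj_stairUnion_succ_of_lt {m : ℕ} (hm : plen f ≤ m) {j : ℕ} (hj : j < m - plen f) :
    conj (stairUnion f g (m + 1)) j = conj (stairUnion f g m) j + 1 := by
  simp only [conj_stairUnion hf hg]
  rw [conj_stair_of_lt_sub_plen hf (by omega) hj,
    conj_stair_of_lt_sub_plen hf (m := m + 1) (by omega) (by omega)]
  omega

theorem conj_stairUnion_succ_eq_succ_iff {m : ℕ} (hm : plen f ≤ m) (j : ℕ) :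
    conj (stairUnion f g (m + 1)) j = conj (stairUnion f g m) j + 1 ↔
      conj (stairUnion f g (m + 2)) (j + 1) = conj (stairUnion f g (m + 1)) (j + 1) + 1 := by
  simp only [conj_stairUnion hf hg]
  rw [conj_stair_succ_succ hf (m := m + 1) (by omega), conj_stair_succ_succ hf (by omega)]
  omega

variable {m : ℕ} (hm : plen f + g 0 ≤ m)
include hm

theorem stairUnion_of_lt_plen {i : ℕ} (hi : i < plen f) :
    stairUnion f g m i = f i + (m - 1 - i) := by
  refine eq_of_forall_lt_iff fun k => ?_
  rw [lt_stairUnion_iff hf hg, ← lt_conj_stair_iff hf]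
  refine ⟨fun hk => not_le.1 fun hk' => ?_, fun hk => by omega⟩
  have hk'' := (lt_conj_stair_iff hf m i k).not.1 (not_lt.2 hk')
  have := hf.pos_of_lt_plen hi
  have := hg.conj_eq_zero_of_le (j := k) (by omega)
  omega

theorem stairUnion_succ_of_lt_plen {i : ℕ} (hi : i < plen f) :
    stairUnion f g (m + 1) i = stairUnion f g m i + 1 := by
  rw [stairUnion_of_lt_plen hf hg hm hi, stairUnion_of_lt_plen hf hg (by omega) hi]
  omega

theorem stairUnion_succ_succ {i : ℕ} (hi : plen f ≤ i) :
    stairUnion f g (m + 1) (i + 1) = stairUnion f g m i := by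
  refine eq_of_forall_lt_iff fun k => ?_
  rw [lt_stairUnion_iff hf hg, lt_stairUnion_iff hf hg]
  rcases lt_or_ge k (m - plen f) with hk | hk
  · rw [conj_stair_of_lt_sub_plen hf (by omega) hk,
      conj_stair_of_lt_sub_plen hf (m := m + 1) (by omega) (by omega)]
    omega
  · have := hg.conj_eq_zero_of_le (j := k) (by omega)
    have := conj_stair_le_plen hf (m := m) (j := k) (by omega)
    have := conj_stair_le_plen hf (m := m + 1) (j := k) (by omega)
    omega

theorem stairUnion_succ_plen : stairUnion f g (m + 1) (plen f) = m - plen f := by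
  refine eq_of_forall_lt_iff fun k => ?_
  rw [lt_stairUnion_iff hf hg]
  rcases lt_or_ge k (m - plen f) with hk | hk
  · rw [conj_stair_of_lt_sub_plen hf (m := m + 1) (by omega) (by omega)]
    omega
  · have := hg.conj_eq_zero_of_le (j := k) (by omega)
    have := conj_stair_le_plen hf (m := m + 1) (j := k) (by omega)
    omega

theorem stairUnion_le_of_plen_le {i : ℕ} (hi : plen f ≤ i) : stairUnion f g m i ≤ m - plen f :=
  calc stairUnion f g m i = stairUnion f g (m + 1) (i + 1) :=
        (stairUnion_succ_succ hf hg hm hi).symm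
    _ ≤ stairUnion f g (m + 1) (plen f) := (isPartition_stairUnion hf hg _).1 (by omega)
    _ = m - plen f := stairUnion_succ_plen hf hg hm

theorem conj_stairUnion_succ_succ_of_ne {j : ℕ}
    (hj : conj (stairUnion f g (m + 1)) j ≠ conj (stairUnion f g m) j + 1) :
    conj (stairUnion f g (m + 1)) (j + 1) = conj (stairUnion f g m) j := by
  have hjK : m - plen f ≤ j := not_lt.1 fun h => hj (conj_stairUnion_succ_of_lt hf hg (by omega) h)
  simp only [conj_stairUnion hf hg]
  rw [conj_stair_succ_succ hf (by omega), hg.conj_eq_zero_of_le (j := j) (by omega),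
    hg.conj_eq_zero_of_le (j := j + 1) (by omega)]

end Stair

section Hook

def hookFactor (L Ls : ℕ → ℕ) (i j : ℕ) : MvPolynomial (Fin 2) ℤ :=
  if Bosonic L Ls i j then 1 - qp ^ (Ls i - (j + 1)) * tp ^ (conj L j - i) else 1

def hookRowProd (L Ls : ℕ → ℕ) (i : ℕ) : MvPolynomial (Fin 2) ℤ :=
  ∏ j ∈ range (L i), hookFactor L Ls i j

variable {L Ls L' Ls' : ℕ → ℕ}

theorem hdown_eq_prod_range (hL : IsPartition L) {N : ℕ} (hN : plen L ≤ N) :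
    hdown L Ls = ∏ i ∈ range N, hookRowProd L Ls i := by
  refine prod_subset (range_subset_range.2 hN) fun i _ hi => ?_
  rw [hL.eq_zero_of_plen_le (not_lt.1 (mem_range.not.1 hi)), prod_range_zero]

theorem hookFactor_eq_one {i j : ℕ} (hrow : Ls i = L i + 1) (hcol : conj Ls j = conj L j + 1) :
    hookFactor L Ls i j = 1 :=
  if_neg (not_not_intro ⟨hrow, hcol⟩)

theorem hookFactor_congr {i j i' j' : ℕ} (hbos : Bosonic L Ls i j ↔ Bosonic L' Ls' i' j')
    (harm : Bosonic L Ls i j → Ls i - (j + 1) = Ls' i' - (j' + 1))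
    (hleg : Bosonic L Ls i j → conj L j - i = conj L' j' - i') :
    hookFactor L Ls i j = hookFactor L' Ls' i' j' := by
  by_cases hb : Bosonic L Ls i j
  · rw [hookFactor, hookFactor, if_pos hb, if_pos (hbos.1 hb), harm hb, hleg hb]
  · rw [hookFactor, hookFactor, if_neg hb, if_neg (hbos.not.1 hb)]

end Hook

section Step

variable {f g : ℕ → ℕ} (hf : IsPartition f) (hg : IsPartition g) {m : ℕ}
  (hm : plen f + g 0 ≤ m)
include hf hg hm

theorem hookRowProd_succ_of_lt_plen {i : ℕ} (hi : i < plen f) :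
    hookRowProd (stairUnion f g (m + 1)) (stairUnion f g (m + 2)) i =
      hookRowProd (stairUnion f g m) (stairUnion f g (m + 1)) i := by
  have hrow₀ := stairUnion_succ_of_lt_plen hf hg hm hi
  have hrow₁ : stairUnion f g (m + 2) i = stairUnion f g (m + 1) i + 1 :=
    stairUnion_succ_of_lt_plen hf hg (by omega) hi
  have hcol₀ : conj (stairUnion f g (m + 2)) 0 = conj (stairUnion f g (m + 1)) 0 + 1 :=
    conj_stairUnion_succ_of_lt hf hg (m := m + 1) (j := 0) (by omega) (by omega)
  have hcols := conj_stairUnion_succ_eq_succ_iff hf hg (m := m) (by omega)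
  unfold hookRowProd
  rw [hrow₀, prod_range_succ', hookFactor_eq_one hrow₁ hcol₀, mul_one]
  refine prod_congr rfl fun j _ => hookFactor_congr ?_ (fun _ => by omega) fun hb => ?_
  · rw [Bosonic, Bosonic, not_iff_not, and_iff_right hrow₁, and_iff_right hrow₀]
    exact (hcols j).symm
  · rw [conj_stairUnion_succ_succ_of_ne hf hg hm fun h => hb ⟨hrow₁, (hcols j).1 h⟩]

theorem hookRowProd_succ_plen :
    hookRowProd (stairUnion f g (m + 1)) (stairUnion f g (m + 2)) (plen f) = 1 := by
  have hrow₀ := stairUnion_succ_plen hf hg hm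
  have hrow₁ : stairUnion f g (m + 2) (plen f) = m + 1 - plen f :=
    stairUnion_succ_plen hf hg (by omega)
  refine prod_eq_one fun j hj => hookFactor_eq_one (by omega) ?_
  rw [mem_range, hrow₀] at hj
  exact conj_stairUnion_succ_of_lt hf hg (m := m + 1) (by omega) (by omega)

theorem hookRowProd_succ_succ {i : ℕ} (hi : plen f ≤ i) :
    hookRowProd (stairUnion f g (m + 1)) (stairUnion f g (m + 2)) (i + 1) =
      hookRowProd (stairUnion f g m) (stairUnion f g (m + 1)) i := by
  have hrow₀ := stairUnion_succ_succ hf hg hm hi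
  have hrow₁ : stairUnion f g (m + 2) (i + 1) = stairUnion f g (m + 1) i :=
    stairUnion_succ_succ hf hg (by omega) hi
  unfold hookRowProd
  rw [hrow₀]
  refine prod_congr rfl fun j hj => ?_
  have hjK : j < m - plen f :=
    (mem_range.1 hj).trans_le (stairUnion_le_of_plen_le hf hg hm hi)
  have hcol₀ := conj_stairUnion_succ_of_lt hf hg (by omega) hjK
  have hcol₁ : conj (stairUnion f g (m + 2)) j = conj (stairUnion f g (m + 1)) j + 1 :=
    conj_stairUnion_succ_of_lt hf hg (by omega) (by omega)
  refine hookFactor_congr ?_ (fun _ => by rw [hrow₁]) fun _ => by omega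
  rw [Bosonic, Bosonic, hrow₀, hrow₁, and_iff_left hcol₁, and_iff_left hcol₀]

theorem hdownOf_succ : hdownOf f g (m + 1) = hdownOf f g m := by
  have hK : plen f ≤ m := by omega
  rw [hdownOf_eq, hdownOf_eq,
    hdown_eq_prod_range (isPartition_stairUnion hf hg m) (plen_stairUnion_le hf hg hK),
    hdown_eq_prod_range (isPartition_stairUnion hf hg (m + 1))
      (N := m + conj g 0 + 1) (by have := plen_stairUnion_le hf hg (m := m + 1) (by omega); omega)]
  exact (prod_range_eq_prod_range_succ_of_shift (K := plen f) (by omega)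
    (fun i hi => hookRowProd_succ_of_lt_plen hf hg hm hi) (hookRowProd_succ_plen hf hg hm)
    (fun i hi => hookRowProd_succ_succ hf hg hm hi)).symm

end Step

theorem hdownOf_eq_of_le {f g : ℕ → ℕ} (hf : IsPartition f) (hg : IsPartition g) {N m : ℕ}
    (hN : plen f + g 0 ≤ N) (hm : N ≤ m) : hdownOf f g m = hdownOf f g N := by
  induction m, hm using Nat.le_induction with
  | base => rfl
  | succ m hm ih => rw [hdownOf_succ hf hg (hN.trans hm), ih]

/-- **Stability of the hook product `h↓`** (Lemma in Appendix C).
If `λ`, `μ` are partitions and `m₁, m₂ ≥ |λ| + |μ|`, then `h↓(m₁) = h↓(m₂)`: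
the hook product `h↓_Λ(q,t)` does not depend on `m` in the stable sector. -/
theorem hdown_stable (f g : ℕ → ℕ) (hf : IsPartition f) (hg : IsPartition g)
    (m₁ m₂ : ℕ) (h₁ : psize f + psize g ≤ m₁) (h₂ : psize f + psize g ≤ m₂) :
    hdownOf f g m₁ = hdownOf f g m₂ := by
  have hN : plen f + g 0 ≤ psize f + psize g := Nat.add_le_add hf.plen_le_psize hg.head_le_psize
  rw [hdownOf_eq_of_le hf hg hN h₁, hdownOf_eq_of_le hf hg hN h₂]

end DoubleMacdonald
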